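/- arXiv:2005.06655 — 3 statements merged into one kernel-verified Lean document; each statement's English description precedes it below -/
import Mathlib

section
/- For an n×n complex matrix A that is strictly diagonally dominant with positive real diagonal entries, |det(A)| ≥ ∏_{i=1}^n (A_{ii} − ∑_{j≠i} |A_{ij}|). -/
open Finset Matrix

noncomputable def Complex.abs : AbsoluteValue ℂ ℝ := NormedField.toAbsoluteValue ℂ

lemma ostrowski_det_step {n : ℕ} (A : Matrix (Fin (n+1)) (Fin (n+1)) ℂ) (h0 : A 0 0 ≠ 0) :
    A.det = A 0 0 * (Matrix.of fun i j : Fin n =>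
      A i.succ j.succ - A i.succ 0 / A 0 0 * A 0 j.succ).det := by
  set A' : Matrix (Fin (n+1)) (Fin (n+1)) ℂ :=
    Matrix.of fun i j => if i = 0 then A 0 j else A i j - A i 0 / A 0 0 * A 0 j with hA'
  set E : Matrix (Fin (n+1)) (Fin (n+1)) ℂ :=
    Matrix.of fun i j => if i = j then 1 else if j = 0 then -(A i 0 / A 0 0) else 0 with hE
  have hEdet : E.det = 1 := by
    have ht : E.BlockTriangular OrderDual.toDual := by
      intro i j hij
      have hij' : i < j := hij
      have hj0 : j ≠ 0 := (lt_of_le_of_lt (Fin.zero_le i) hij').ne'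
      simp [hE, hij'.ne, hj0]
    rw [Matrix.det_of_lowerTriangular E ht]
    apply Finset.prod_eq_one
    intro i _
    simp [hE]
  have hEA : E * A = A' := by
    ext i j
    rw [Matrix.mul_apply]
    rcases eq_or_ne i 0 with hi | hi
    · subst hi
      rw [Finset.sum_eq_single_of_mem 0 (Finset.mem_univ _)]
      · simp [hE, hA']
      · intro k _ hk
        simp [hE, Ne.symm hk, hk]
    · rw [← Finset.add_sum_erase _ _ (Finset.mem_univ i),
        ← Finset.add_sum_erase _ _ (Finset.mem_erase.2 ⟨Ne.symm hi, Finset.mem_univ _⟩),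
        Finset.sum_eq_zero]
      · simp [hE, hA', hi, Ne.symm hi]
        ring
      · intro k hk
        simp only [Finset.mem_erase] at hk
        simp [hE, Ne.symm hk.2.1, hk.1]
  have hdetAA' : A'.det = A.det := by
    rw [← hEA, Matrix.det_mul, hEdet, one_mul]
  rw [← hdetAA', Matrix.det_succ_column_zero,
    Finset.sum_eq_single_of_mem 0 (Finset.mem_univ _)]
  · simp only [Fin.val_zero, pow_zero, one_mul, Fin.succAbove_zero]
    have h1 : A' 0 0 = A 0 0 := by simp [hA']
    have h2 : A'.submatrix Fin.succ Fin.succ = Matrix.of fun i j : Fin n =>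
        A i.succ j.succ - A i.succ 0 / A 0 0 * A 0 j.succ := by
      ext i j
      simp [hA', Fin.succ_ne_zero]
    rw [h1, h2]
  · intro k _ hk
    have : A' k 0 = 0 := by
      simp [hA', hk, div_mul_cancel₀ _ h0]
    rw [this]; ring

lemma ostrowski_aux (n : ℕ) (A : Matrix (Fin n) (Fin n) ℂ)
    (hdd : ∀ i, ∑ j ∈ Finset.univ.erase i, Complex.abs (A i j) < Complex.abs (A i i)) :
    ∏ i, (Complex.abs (A i i) - ∑ j ∈ Finset.univ.erase i, Complex.abs (A i j))
      ≤ Complex.abs A.det := by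
  induction n with
  | zero => simp [Matrix.det_fin_zero]
  | succ n ih =>
    have h00abs : 0 < Complex.abs (A 0 0) :=
      lt_of_le_of_lt (Finset.sum_nonneg fun j _ => AbsoluteValue.nonneg _ _) (hdd 0)
    have h00 : A 0 0 ≠ 0 := by
      intro h; rw [h] at h00abs; simp at h00abs
    set c : Fin n → ℂ := fun i => A i.succ 0 / A 0 0 with hc
    set B : Matrix (Fin n) (Fin n) ℂ :=
      Matrix.of fun i j => A i.succ j.succ - c i * A 0 j.succ with hB
    have hr0 : (∑ j : Fin n, Complex.abs (A 0 j.succ))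
        = ∑ j ∈ Finset.univ.erase (0 : Fin (n+1)), Complex.abs (A 0 j) := by
      rw [Finset.sum_erase_eq_sub (Finset.mem_univ _), Fin.sum_univ_succ]
      ring
    have hcabs : ∀ i : Fin n,
        Complex.abs (c i) * Complex.abs (A 0 0) = Complex.abs (A i.succ 0) := by
      intro i
      rw [hc]
      simp only [map_div₀]
      rw [div_mul_cancel₀]
      exact fun h => h00 (by simpa using h)
    have key : ∀ i : Fin n,
        Complex.abs (A i.succ i.succ)
            - ∑ j ∈ Finset.univ.erase i.succ, Complex.abs (A i.succ j)
          ≤ Complex.abs (B i i) - ∑ j ∈ Finset.univ.erase i, Complex.abs (B i j) := by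
      intro i
      have hX : Complex.abs (c i) * (∑ j ∈ Finset.univ.erase (0 : Fin (n+1)), Complex.abs (A 0 j))
          ≤ Complex.abs (A i.succ 0) := by
        calc Complex.abs (c i) * (∑ j ∈ Finset.univ.erase (0 : Fin (n+1)), Complex.abs (A 0 j))
            ≤ Complex.abs (c i) * Complex.abs (A 0 0) :=
              mul_le_mul_of_nonneg_left (le_of_lt (hdd 0)) (AbsoluteValue.nonneg _ _)
          _ = Complex.abs (A i.succ 0) := hcabs i
      have hs : ∑ j ∈ Finset.univ.erase i, Complex.abs (B i j)
          ≤ (∑ j ∈ Finset.univ.erase i, Complex.abs (A i.succ j.succ))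
            + Complex.abs (c i) * ∑ j ∈ Finset.univ.erase i, Complex.abs (A 0 j.succ) := by
        rw [Finset.mul_sum, ← Finset.sum_add_distrib]
        refine Finset.sum_le_sum fun j _ => ?_
        have h := Complex.abs.add_le (A i.succ j.succ) (-(c i * A 0 j.succ))
        simpa [hB, sub_eq_add_neg, _root_.map_mul] using h
      have hBii : Complex.abs (A i.succ i.succ)
          - Complex.abs (c i) * Complex.abs (A 0 i.succ) ≤ Complex.abs (B i i) := by
        have h := Complex.abs.add_le (A i.succ i.succ - c i * A 0 i.succ) (c i * A 0 i.succ)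
        simp only [sub_add_cancel, _root_.map_mul] at h
        have : Complex.abs (A i.succ i.succ - c i * A 0 i.succ) = Complex.abs (B i i) := by
          simp [hB]
        linarith [h, this.symm.le, this.le]
      have hsum1 : ∑ j ∈ Finset.univ.erase i, Complex.abs (A i.succ j.succ)
          = (∑ j : Fin n, Complex.abs (A i.succ j.succ)) - Complex.abs (A i.succ i.succ) :=
        Finset.sum_erase_eq_sub (Finset.mem_univ _)
      have hsum2 : ∑ j ∈ Finset.univ.erase i, Complex.abs (A 0 j.succ)
          = (∑ j ∈ Finset.univ.erase (0 : Fin (n+1)), Complex.abs (A 0 j))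
            - Complex.abs (A 0 i.succ) := by
        rw [Finset.sum_erase_eq_sub (Finset.mem_univ _), hr0]
      have hsum3 : ∑ j ∈ Finset.univ.erase i.succ, Complex.abs (A i.succ j)
          = Complex.abs (A i.succ 0) + ((∑ j : Fin n, Complex.abs (A i.succ j.succ))
            - Complex.abs (A i.succ i.succ)) := by
        rw [Finset.sum_erase_eq_sub (Finset.mem_univ _), Fin.sum_univ_succ]
        ring
      rw [hsum1, hsum2, mul_sub] at hs
      linarith [hs, hBii, hX, hsum3]
    have hBdd : ∀ i, ∑ j ∈ Finset.univ.erase i, Complex.abs (B i j)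
        < Complex.abs (B i i) := by
      intro i
      have h1 := key i
      have h2 := hdd i.succ
      linarith
    have hIH := ih B hBdd
    have hdet : A.det = A 0 0 * B.det := ostrowski_det_step A h00
    have hterm_nonneg : ∀ i : Fin (n+1),
        0 ≤ Complex.abs (A i i) - ∑ j ∈ Finset.univ.erase i, Complex.abs (A i j) :=
      fun i => le_of_lt (sub_pos.2 (hdd i))
    calc ∏ i, (Complex.abs (A i i) - ∑ j ∈ Finset.univ.erase i, Complex.abs (A i j))
        = (Complex.abs (A 0 0) - ∑ j ∈ Finset.univ.erase (0:Fin (n+1)), Complex.abs (A 0 j))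
          * ∏ i : Fin n, (Complex.abs (A i.succ i.succ)
            - ∑ j ∈ Finset.univ.erase i.succ, Complex.abs (A i.succ j)) :=
          Fin.prod_univ_succ _
      _ ≤ Complex.abs (A 0 0) * ∏ i : Fin n, (Complex.abs (B i i)
            - ∑ j ∈ Finset.univ.erase i, Complex.abs (B i j)) := by
          refine mul_le_mul ?_ ?_ ?_ (AbsoluteValue.nonneg _ _)
          · have : 0 ≤ ∑ j ∈ Finset.univ.erase (0:Fin (n+1)), Complex.abs (A 0 j) :=
              Finset.sum_nonneg fun j _ => AbsoluteValue.nonneg _ _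
            linarith
          · exact Finset.prod_le_prod (fun i _ => hterm_nonneg i.succ) (fun i _ => key i)
          · exact Finset.prod_nonneg fun i _ => hterm_nonneg i.succ
      _ ≤ Complex.abs (A 0 0) * Complex.abs B.det :=
          mul_le_mul_of_nonneg_left hIH (AbsoluteValue.nonneg _ _)
      _ = Complex.abs A.det := by rw [hdet, _root_.map_mul]

/-- Ostrowski's determinant lower bound for strictly diagonally dominant
matrices with positive real diagonal entries. -/
theorem ostrowski_det_lower_bound {n : ℕ} (A : Matrix (Fin n) (Fin n) ℂ)
    (hdiag_im : ∀ i, (A i i).im = 0)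
    (hdiag_pos : ∀ i, 0 < (A i i).re)
    (hdd : ∀ i, ∑ j ∈ Finset.univ.erase i, ‖A i j‖ < (A i i).re) :
    ∏ i, ((A i i).re - ∑ j ∈ Finset.univ.erase i, ‖A i j‖)
      ≤ ‖A.det‖ := by
  have habs : ∀ i, Complex.abs (A i i) = (A i i).re := by
    intro i
    have h : A i i = ((A i i).re : ℂ) := Complex.ext rfl (by simp [hdiag_im i])
    rw [h, show Complex.abs ((A i i).re : ℂ) = ‖((A i i).re : ℂ)‖ from rfl, Complex.norm_real,
      Real.norm_eq_abs, abs_of_pos (by simpa using hdiag_pos i)]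
    simp
  have hdd' : ∀ i, ∑ j ∈ Finset.univ.erase i, Complex.abs (A i j) < Complex.abs (A i i) := by
    intro i; rw [habs i]; exact hdd i
  have h := ostrowski_aux n A hdd'
  calc ∏ i, ((A i i).re - ∑ j ∈ Finset.univ.erase i, Complex.abs (A i j))
      = ∏ i, (Complex.abs (A i i) - ∑ j ∈ Finset.univ.erase i, Complex.abs (A i j)) := by
        exact Finset.prod_congr rfl fun i _ => by rw [habs i]
    _ ≤ Complex.abs A.det := h
end

section
/- Let A be an n×n complex matrix with positive real diagonal entries and define ρ = max_i ∑_{j≠i} |A_{ij}|/A_{ii}. If ρ < 1, then |det(A)| ≥ (1−ρ)^n · ∏_{i=1}^n A_{ii}. -/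
/-!
Scaling each row of `A` by its diagonal entry gives a matrix `B` with unit diagonal and
off-diagonal row sums at most `ρ`, and `det A = (∏ i, A i i) * det B`. By Gershgorin every
eigenvalue of `B` lies within `ρ` of `1`, so has norm at least `1 - ρ`; since `det B` is the
product of the eigenvalues (with multiplicity), `‖det B‖ ≥ (1 - ρ) ^ n`.
-/

open Matrix Module Finset

namespace Matrix

variable {𝕜 ι : Type*} [NormedField 𝕜] [Fintype ι] [DecidableEq ι]

theorem le_norm_of_hasEigenvalue {A : Matrix ι ι 𝕜} {r : ℝ}
    (hA : ∀ k, r ≤ ‖A k k‖ - ∑ j ∈ univ.erase k, ‖A k j‖) {μ : 𝕜}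
    (hμ : End.HasEigenvalue (toLin' A) μ) : r ≤ ‖μ‖ := by
  obtain ⟨k, hk⟩ := eigenvalue_mem_ball hμ
  rw [mem_closedBall_iff_norm'] at hk
  linarith [hA k, norm_sub_norm_le (A k k) μ]

theorem pow_card_le_norm_det [IsAlgClosed 𝕜] (A : Matrix ι ι 𝕜) {c : ℝ} (hc : 0 ≤ c)
    (h : ∀ μ, End.HasEigenvalue (toLin' A) μ → c ≤ ‖μ‖) : c ^ Fintype.card ι ≤ ‖A.det‖ := by
  lift c to NNReal using hc
  have hroots : ∀ μ ∈ A.charpoly.roots, c ≤ ‖μ‖₊ := fun μ hμ => by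
    refine h μ ?_
    rw [End.hasEigenvalue_iff_mem_spectrum, spectrum_toLin', mem_spectrum_iff_isRoot_charpoly]
    exact (Polynomial.mem_roots'.mp hμ).2
  have hcard : Multiset.card A.charpoly.roots = Fintype.card ι := by
    rw [IsAlgClosed.card_roots_eq_natDegree, charpoly_natDegree_eq_dim]
  have hprod : ‖A.det‖₊ = (A.charpoly.roots.map (‖·‖₊)).prod := by
    rw [det_eq_prod_roots_charpoly]
    exact map_multiset_prod (nnnormHom (α := 𝕜)) _
  suffices c ^ Fintype.card ι ≤ ‖A.det‖₊ by exact_mod_cast this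
  rw [hprod, ← hcard, ← Multiset.card_map (‖·‖₊)]
  exact Multiset.pow_card_le_prod fun x hx => by
    obtain ⟨μ, hμ, rfl⟩ := Multiset.mem_map.mp hx
    exact hroots μ hμ

theorem diagonal_diag_mul_of_div_diag (A : Matrix ι ι 𝕜) (hA : ∀ i, A i i ≠ 0) :
    diagonal A.diag * of (fun i j => A i j / A i i) = A := by
  ext i j
  simp [diagonal_mul, mul_div_cancel₀ _ (hA i)]

theorem one_sub_pow_mul_prod_norm_diag_le_norm_det [IsAlgClosed 𝕜] (A : Matrix ι ι 𝕜) {ρ : ℝ}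
    (hρ : ρ ≤ 1) (hA : ∀ i, ∑ j ∈ univ.erase i, ‖A i j‖ ≤ ρ * ‖A i i‖) :
    (1 - ρ) ^ Fintype.card ι * ∏ i, ‖A i i‖ ≤ ‖A.det‖ := by
  obtain ⟨i, hi⟩ | hdiag := em (∃ i, A i i = 0)
  · rw [prod_eq_zero (mem_univ i) (by simp [hi]), mul_zero]
    exact norm_nonneg _
  push Not at hdiag
  set B : Matrix ι ι 𝕜 := of fun i j => A i j / A i i
  have hgap : ∀ k, 1 - ρ ≤ ‖B k k‖ - ∑ j ∈ univ.erase k, ‖B k j‖ := fun k => by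
    have hk : 0 < ‖A k k‖ := norm_pos_iff.mpr (hdiag k)
    have hrow : ∑ j ∈ univ.erase k, ‖B k j‖ ≤ ρ := by
      simp only [B, of_apply, norm_div, ← sum_div]
      exact (div_le_iff₀ hk).mpr (hA k)
    simp only [B, of_apply, div_self (hdiag k), norm_one] at hrow ⊢
    linarith
  have hdetB := pow_card_le_norm_det B (by linarith) fun μ => le_norm_of_hasEigenvalue hgap
  have hdet : A.det = (diagonal A.diag).det * B.det := by
    rw [← det_mul, diagonal_diag_mul_of_div_diag A hdiag]
  rw [hdet, det_diagonal, norm_mul, norm_prod, mul_comm]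
  exact mul_le_mul_of_nonneg_left hdetB (by positivity)

end Matrix

/-- Determinant lower bound in terms of the maximum relative off-diagonal
row sum ρ: if ρ < 1 then |det A| ≥ (1-ρ)^n · ∏ A_{ii}. -/
theorem det_lower_bound_rho {n : ℕ} (hn : 0 < n) (A : Matrix (Fin n) (Fin n) ℂ)
    (hdiag_im : ∀ i, (A i i).im = 0)
    (hdiag_pos : ∀ i, 0 < (A i i).re)
    (ρ : ℝ)
    (hρ_def : ρ = (Finset.univ.sup' (Finset.univ_nonempty_iff.mpr ⟨⟨0, hn⟩⟩)
      fun i => (∑ j ∈ Finset.univ.erase i, ‖A i j‖) / (A i i).re))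
    (hρ : ρ < 1) :
    (1 - ρ) ^ n * ∏ i, (A i i).re ≤ ‖A.det‖ := by
  have hnorm : ∀ i, ‖A i i‖ = (A i i).re := fun i => by
    rw [← Complex.re_add_im (A i i), hdiag_im i, Complex.ofReal_zero, zero_mul, add_zero,
      Complex.norm_of_nonneg (hdiag_pos i).le, Complex.ofReal_re]
  have hrow : ∀ i, ∑ j ∈ univ.erase i, ‖A i j‖ ≤ ρ * ‖A i i‖ := fun i => by
    rw [hnorm, ← div_le_iff₀ (hdiag_pos i), hρ_def]
    exact le_sup' (fun i => (∑ j ∈ univ.erase i, ‖A i j‖) / (A i i).re) (mem_univ i)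
  simpa only [hnorm, Fintype.card_fin] using
    one_sub_pow_mul_prod_norm_diag_le_norm_det A hρ.le hrow
end

section
/- For positive reals a, b with a ≥ b, and a Hermitian positive definite n×n matrix A with ρ_A = max_i ∑_{j≠i}|A_{ij}|/A_{ii} < 1, the two-sided bound holds: |log det(A) − ∑_i log A_{ii}| ≤ max{0, n·|log(1−ρ_A)|}, i.e., ∑_i log A_{ii} + n·log(1−ρ_A) ≤ log det(A) ≤ ∑_i log A_{ii}. -/
/-!
Let `D` be the diagonal of `A` and `B = D^{-1/2} A D^{-1/2}`, so that `det A = det D · det B`.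
`B` is positive definite with unit diagonal, so its eigenvalues `λ_k` are positive with
`∑ λ_k = tr B = n`, whence `∑ log λ_k ≤ ∑ (λ_k - 1) = 0` (Hadamard's inequality).
`B = (D^{-1/2} A) D^{-1/2}` has the characteristic polynomial of `D⁻¹ A`, whose Gershgorin discs
are centred at `1` with radii at most `ρ`; hence `λ_k ≥ 1 - ρ`, which gives the lower bound.
-/

open scoped ComplexOrder
open Finset

theorem Real.sum_log_le_zero_of_sum_eq_card {ι : Type*} [Fintype ι] {x : ι → ℝ}
    (hx : ∀ i, 0 < x i) (hsum : ∑ i, x i = Fintype.card ι) : ∑ i, Real.log (x i) ≤ 0 :=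
  calc ∑ i, Real.log (x i) ≤ ∑ i, (x i - 1) :=
        sum_le_sum fun i _ => Real.log_le_sub_one_of_pos (hx i)
    _ = 0 := by simp [sum_sub_distrib, hsum]

namespace Matrix

variable {ι 𝕜 : Type*} [RCLike 𝕜] {A : Matrix ι ι 𝕜}

noncomputable def jacobiWeight (A : Matrix ι ι 𝕜) (i : ι) : ℝ := (√(RCLike.re (A i i)))⁻¹

namespace PosDef

theorem re_diag_pos (hA : A.PosDef) (i : ι) : 0 < RCLike.re (A i i) :=
  (RCLike.pos_iff.1 hA.diag_pos).1

theorem jacobiWeight_ne_zero (hA : A.PosDef) (i : ι) : jacobiWeight A i ≠ 0 :=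
  inv_ne_zero (Real.sqrt_pos.2 (hA.re_diag_pos i)).ne'

theorem jacobiWeight_mul_self (hA : A.PosDef) (i : ι) :
    (jacobiWeight A i : 𝕜) * jacobiWeight A i = (RCLike.re (A i i) : 𝕜)⁻¹ := by
  rw [← RCLike.ofReal_mul, ← RCLike.ofReal_inv, jacobiWeight, ← mul_inv,
    Real.mul_self_sqrt (hA.re_diag_pos i).le]

theorem inv_re_diag_mul_diag (hA : A.PosDef) (i : ι) :
    (RCLike.re (A i i) : 𝕜)⁻¹ * A i i = 1 :=
  (inv_mul_eq_one₀ (RCLike.ofReal_ne_zero.2 (hA.re_diag_pos i).ne')).2 (hA.1.coe_re_apply_self i)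

end PosDef

variable [Fintype ι] [DecidableEq ι]

theorem norm_sub_one_le_of_hasEigenvalue {K : Type*} [NormedField K] {C : Matrix ι ι K} {ρ : ℝ}
    (hdiag : ∀ i, C i i = 1) (hrow : ∀ i, ∑ j ∈ univ.erase i, ‖C i j‖ ≤ ρ) {μ : K}
    (hμ : Module.End.HasEigenvalue (toLin' C) μ) : ‖μ - 1‖ ≤ ρ := by
  obtain ⟨k, hk⟩ := eigenvalue_mem_ball hμ
  rw [Metric.mem_closedBall, dist_eq_norm, hdiag] at hk
  exact hk.trans (hrow k)

theorem hasEigenvalue_toLin'_mul_comm {R : Type*} [CommRing R] [IsDomain R] {M N : Matrix ι ι R}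
    {μ : R} (h : Module.End.HasEigenvalue (toLin' (M * N)) μ) :
    Module.End.HasEigenvalue (toLin' (N * M)) μ := by
  rw [Module.End.hasEigenvalue_iff_isRoot_charpoly, charpoly_toLin'] at h ⊢
  rwa [← charpoly_mul_comm]

theorem IsHermitian.hasEigenvalue_eigenvalues (hA : A.IsHermitian) (k : ι) :
    Module.End.HasEigenvalue (toLin' A) (hA.eigenvalues k : 𝕜) := by
  rw [Module.End.hasEigenvalue_iff_isRoot_charpoly, charpoly_toLin', hA.charpoly_eq]
  simp [Polynomial.eval_prod, prod_eq_zero (mem_univ k)]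

noncomputable def jacobiScale (A : Matrix ι ι 𝕜) : Matrix ι ι 𝕜 :=
  diagonal (fun i => (jacobiWeight A i : 𝕜)) * A * diagonal (fun i => (jacobiWeight A i : 𝕜))

theorem jacobiScale_apply (i j : ι) :
    jacobiScale A i j = jacobiWeight A i * A i j * jacobiWeight A j := by
  simp [jacobiScale, diagonal_mul, mul_diagonal]

namespace PosDef

theorem jacobiScale (hA : A.PosDef) : (jacobiScale A).PosDef := by
  have hW : IsUnit (diagonal fun i => (jacobiWeight A i : 𝕜)) :=
    isUnit_diagonal.2 (Pi.isUnit_iff.2 fun i =>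
      isUnit_iff_ne_zero.2 (RCLike.ofReal_ne_zero.2 (hA.jacobiWeight_ne_zero i)))
  simpa [Matrix.jacobiScale, star_eq_conjTranspose, diagonal_conjTranspose, Pi.star_def] using
    (IsUnit.posDef_star_right_conjugate_iff hW).2 hA

theorem jacobiScale_apply_self (hA : A.PosDef) (i : ι) : Matrix.jacobiScale A i i = 1 := by
  rw [jacobiScale_apply, mul_right_comm, hA.jacobiWeight_mul_self, hA.inv_re_diag_mul_diag]

theorem det_eq_prod_mul_det_jacobiScale (hA : A.PosDef) :
    A.det = (∏ i, (RCLike.re (A i i) : 𝕜)) * (Matrix.jacobiScale A).det := by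
  have hd (i : ι) : (RCLike.re (A i i) : 𝕜) ≠ 0 :=
    RCLike.ofReal_ne_zero.2 (hA.re_diag_pos i).ne'
  rw [Matrix.jacobiScale, det_mul, det_mul, det_diagonal, mul_comm _ (∏ i, _), ← mul_assoc,
    ← prod_mul_distrib, ← mul_assoc, ← prod_mul_distrib,
    prod_eq_one fun i _ => by rw [mul_assoc, hA.jacobiWeight_mul_self, mul_inv_cancel₀ (hd i)],
    one_mul]

theorem sum_eigenvalues_jacobiScale (hA : A.PosDef) :
    ∑ k, hA.jacobiScale.1.eigenvalues k = Fintype.card ι := by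
  have := hA.jacobiScale.1.trace_eq_sum_eigenvalues
  simp only [trace, diag_apply, hA.jacobiScale_apply_self, sum_const, card_univ,
    nsmul_eq_mul, mul_one] at this
  exact_mod_cast this.symm

theorem re_det_eq_prod_mul_prod_eigenvalues (hA : A.PosDef) :
    RCLike.re A.det = (∏ i, RCLike.re (A i i)) * ∏ k, hA.jacobiScale.1.eigenvalues k := by
  rw [hA.det_eq_prod_mul_det_jacobiScale, hA.jacobiScale.1.det_eq_prod_eigenvalues]
  simp only [← RCLike.ofReal_prod, ← RCLike.ofReal_mul, RCLike.ofReal_re]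

theorem abs_eigenvalues_jacobiScale_sub_one_le (hA : A.PosDef) {ρ : ℝ}
    (hrow : ∀ i, ∑ j ∈ univ.erase i, ‖A i j‖ ≤ ρ * RCLike.re (A i i)) (k : ι) :
    |hA.jacobiScale.1.eigenvalues k - 1| ≤ ρ := by
  set W : Matrix ι ι 𝕜 := diagonal fun i => (jacobiWeight A i : 𝕜)
  set C : Matrix ι ι 𝕜 := diagonal (fun i => (RCLike.re (A i i) : 𝕜)⁻¹) * A
  have hC : W * (W * A) = C := by
    rw [← mul_assoc, diagonal_mul_diagonal]
    simp only [hA.jacobiWeight_mul_self, C]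
  have hμ := hasEigenvalue_toLin'_mul_comm (M := W * A) (N := W)
    (hA.jacobiScale.1.hasEigenvalue_eigenvalues k)
  rw [hC] at hμ
  have hdiag (i : ι) : C i i = 1 := by
    simp only [C, diagonal_mul, hA.inv_re_diag_mul_diag]
  have hCrow (i : ι) : ∑ j ∈ univ.erase i, ‖C i j‖ ≤ ρ := by
    simp only [C, diagonal_mul, norm_mul, norm_inv, RCLike.norm_ofReal,
      abs_of_pos (hA.re_diag_pos i), ← mul_sum]
    rw [inv_mul_le_iff₀ (hA.re_diag_pos i), mul_comm]
    exact hrow i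
  have := norm_sub_one_le_of_hasEigenvalue hdiag hCrow hμ
  rwa [← RCLike.ofReal_one, ← RCLike.ofReal_sub, RCLike.norm_ofReal] at this

theorem log_re_det_eq_sum_log_add_sum_log_eigenvalues (hA : A.PosDef) :
    Real.log (RCLike.re A.det) =
      ∑ i, Real.log (RCLike.re (A i i)) + ∑ k, Real.log (hA.jacobiScale.1.eigenvalues k) := by
  rw [hA.re_det_eq_prod_mul_prod_eigenvalues,
    Real.log_mul (prod_pos fun i _ => hA.re_diag_pos i).ne'
      (prod_pos fun k _ => hA.jacobiScale.eigenvalues_pos k).ne',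
    Real.log_prod fun i _ => (hA.re_diag_pos i).ne',
    Real.log_prod fun k _ => (hA.jacobiScale.eigenvalues_pos k).ne']

theorem log_re_det_le_sum_log_re_diag (hA : A.PosDef) :
    Real.log (RCLike.re A.det) ≤ ∑ i, Real.log (RCLike.re (A i i)) := by
  rw [hA.log_re_det_eq_sum_log_add_sum_log_eigenvalues]
  linarith [Real.sum_log_le_zero_of_sum_eq_card hA.jacobiScale.eigenvalues_pos
    hA.sum_eigenvalues_jacobiScale]

theorem sum_log_re_diag_add_card_mul_log_le_log_re_det (hA : A.PosDef) {ρ : ℝ} (hρ : ρ < 1)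
    (hrow : ∀ i, ∑ j ∈ univ.erase i, ‖A i j‖ ≤ ρ * RCLike.re (A i i)) :
    ∑ i, Real.log (RCLike.re (A i i)) + Fintype.card ι * Real.log (1 - ρ) ≤
      Real.log (RCLike.re A.det) := by
  have hlog_eig (k : ι) : Real.log (1 - ρ) ≤ Real.log (hA.jacobiScale.1.eigenvalues k) :=
    Real.log_le_log (by linarith) <| by
      linarith [(abs_le.1 (hA.abs_eigenvalues_jacobiScale_sub_one_le hrow k)).1]
  have := sum_le_sum fun k (_ : k ∈ univ) => hlog_eig k
  rw [sum_const, card_univ, nsmul_eq_mul] at this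
  rw [hA.log_re_det_eq_sum_log_add_sum_log_eigenvalues]
  linarith

end PosDef
end Matrix

/-- Two-sided bound on log det of a Hermitian positive definite diagonally
dominant matrix: ∑ log A_{ii} + n·log(1−ρ) ≤ log det A ≤ ∑ log A_{ii}. -/
theorem log_det_two_sided {n : ℕ} (hn : 0 < n) (A : Matrix (Fin n) (Fin n) ℂ)
    (hA : A.PosDef)
    (ρ : ℝ)
    (hρ_def : ρ = (Finset.univ.sup' (Finset.univ_nonempty_iff.mpr ⟨⟨0, hn⟩⟩)
      fun i => (∑ j ∈ Finset.univ.erase i, ‖A i j‖) / (A i i).re))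
    (hρ : ρ < 1) :
    (∑ i, Real.log (A i i).re) + n * Real.log (1 - ρ)
        ≤ Real.log A.det.re ∧
      Real.log A.det.re ≤ ∑ i, Real.log (A i i).re := by
  have hrow (i : Fin n) : ∑ j ∈ univ.erase i, ‖A i j‖ ≤ ρ * (A i i).re := by
    have hdiag : 0 < (A i i).re := hA.re_diag_pos i
    rw [← div_le_iff₀ hdiag, hρ_def]
    exact le_sup' (fun i => (∑ j ∈ univ.erase i, ‖A i j‖) / (A i i).re) (mem_univ i)
  refine ⟨?_, hA.log_re_det_le_sum_log_re_diag⟩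
  have := hA.sum_log_re_diag_add_card_mul_log_le_log_re_det hρ hrow
  rwa [Fintype.card_fin] at this
end
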